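/- Let V, W be real inner product (or normed) spaces and let 𝒢((U,Z),(X,Y)) := A(U,Y) − S*(Z,Y) + A(X,Z) + S(U,X) + m(u_X-component pairing with U) be a bilinear form on (V×W)² where S and S* are symmetric positive semidefinite bilinear forms such that |||(U,Z)|||² := S(U,U) + S*(Z,Z) (plus a measurement term m(u,u)) defines a norm. Then 𝒢 satisfies the inf-sup condition with constant γ = 1: for every (U,Z) there exists (X,Y), namely (X,Y) = (U,−Z), with 𝒢((U,Z),(U,−Z)) ≥ |||(U,Z)|||² and |||(U,−Z)||| ≤ |||(U,Z)|||. -/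
import Mathlib


/-- Inf-sup stability with constant `γ = 1` of the stabilized optimality-system bilinear form
`𝒢((U,Z),(X,Y)) = A(U,Y) − S*(Z,Y) + A(X,Z) + S(U,X) + m(U,X)`:
with the test choice `(X,Y) = (U,−Z)` one has `𝒢((U,Z),(U,−Z)) ≥ |||(U,Z)|||²` and
`|||(U,−Z)||| ≤ |||(U,Z)|||`. -/
theorem stmt_2 {V W : Type*} [AddCommGroup V] [Module ℝ V] [AddCommGroup W] [Module ℝ W]
    (A : V →ₗ[ℝ] W →ₗ[ℝ] ℝ)
    (S : V →ₗ[ℝ] V →ₗ[ℝ] ℝ) (Sstar : W →ₗ[ℝ] W →ₗ[ℝ] ℝ) (m : V →ₗ[ℝ] V →ₗ[ℝ] ℝ)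
    (hSsymm : ∀ x y, S x y = S y x) (hSpos : ∀ x, 0 ≤ S x x)
    (hSstarsymm : ∀ x y, Sstar x y = Sstar y x) (hSstarpos : ∀ x, 0 ≤ Sstar x x)
    (hmsymm : ∀ x y, m x y = m y x) (hmpos : ∀ x, 0 ≤ m x x)
    (G : (V × W) → (V × W) → ℝ)
    (hG : ∀ U Z X Y, G (U, Z) (X, Y) = A U Y - Sstar Z Y + A X Z + S U X + m U X)
    (tnorm : V × W → ℝ)
    (htnorm : ∀ U Z, tnorm (U, Z) = Real.sqrt (S U U + m U U + Sstar Z Z))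
    (hnorm_def : ∀ P : V × W, tnorm P = 0 → P = 0) :
    ∀ U : V, ∀ Z : W,
      G (U, Z) (U, -Z) ≥ (tnorm (U, Z)) ^ 2 ∧ tnorm (U, -Z) ≤ tnorm (U, Z) := by
  intro U Z
  have hsum : 0 ≤ S U U + m U U + Sstar Z Z := by
    have := hSpos U; have := hmpos U; have := hSstarpos Z; linarith
  have hGval : G (U, Z) (U, -Z) = S U U + m U U + Sstar Z Z := by
    rw [hG]
    simp [map_neg]
    ring
  constructor
  · rw [hGval, htnorm, Real.sq_sqrt hsum]
  · rw [htnorm, htnorm]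
    simp [map_neg]
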